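/- Let A_1, …, A_k be pairwise commuting N×N matrices with nonnegative integer entries forming an irreducible family, with every row sum of every A_i at least 2 and with A = A_1⋯A_k irreducible; let x be the unimodular Perron–Frobenius eigenvector and let M be the Borel probability measure on X_B determined by the cylinder formula. For m ∈ ℕ let Ṽ_m = span{χ_{[ν]} : ν ∈ F^mB} in L²(X_B, M). Then for every m ≥ 1, Ṽ_m ∩ Ṽ_{m−1}^⊥ equals the linear span of the union of the subspaces E_γ over all γ ∈ FB with |γ| = m − 1. Consequently, for every n ∈ ℕ, 𝒲_n = ⊕_{j=1}^{k} (Ṽ_{nk+j} ∩ Ṽ_{nk+j−1}^⊥), an orthogonal direct sum. -/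

import Mathlib

open scoped Classical ENNReal Topology
open TopologicalSpace MeasureTheory Filter Set
open Fin.NatCast

namespace KBratteli

variable (k N : ℕ) [NeZero k] (A : Fin k → Matrix (Fin N) (Fin N) ℕ)

/-- An edge at level `n` of the stationary `k`-Bratteli diagram of the matrices
`A 0, …, A (k-1)`: an element of `Edge k N A n` is an edge whose source lies in the
level-`(n+1)` vertex set and whose range lies in the level-`n` vertex set (both copies of
`Fin N`); there are exactly `A (n % k) p q` edges with range `p` and source `q`. -/
structure Edge (n : ℕ) : Type where
  rg : Fin N
  src : Fin N
  idx : Fin (A (n : Fin k) rg src)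

/-- The infinite path space `X_B` of the stationary `k`-Bratteli diagram of `A`. -/
def PathSpace : Type :=
  { x : (n : ℕ) → Edge k N A n // ∀ n, (x n).src = (x (n + 1)).rg }

/-- A finite path of length `ℓ` beginning at level `0`: a composable string of edges,
together with the vertices it visits.  Length-`0` paths are vertices of `V₀`. -/
structure FinPath (ℓ : ℕ) : Type where
  vtx : Fin (ℓ + 1) → Fin N
  edge : (i : Fin ℓ) → Edge k N A i
  rg_eq : ∀ i : Fin ℓ, (edge i).rg = vtx i.castSucc
  src_eq : ∀ i : Fin ℓ, (edge i).src = vtx i.succ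

/-- `FB`: the set of all finite paths (of all lengths) beginning at level `0`. -/
abbrev FB : Type := Σ ℓ : ℕ, FinPath k N A ℓ

variable {k N A}

/-- The source (final) vertex of a finite path. -/
def FinPath.src {ℓ : ℕ} (lam : FinPath k N A ℓ) : Fin N := lam.vtx (Fin.last ℓ)

/-- The range (initial, level-0) vertex of a finite path. -/
def FinPath.rg {ℓ : ℕ} (lam : FinPath k N A ℓ) : Fin N := lam.vtx 0

/-- The length-0 finite path at the level-0 vertex `v`. -/
def vertexPath (v : Fin N) : FinPath k N A 0 where
  vtx := fun _ => v
  edge := fun i => i.elim0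
  rg_eq := fun i => i.elim0
  src_eq := fun i => i.elim0

/-- The cylinder set `[λ]` of a finite path `λ`: all infinite paths with initial
segment `λ`. -/
def Cyl {ℓ : ℕ} (lam : FinPath k N A ℓ) : Set (PathSpace k N A) :=
  { x | (x.1 0).rg = lam.rg ∧ ∀ i : Fin ℓ, x.1 i = lam.edge i }

variable (k N A) in
/-- The collection of all cylinder sets. -/
def cylinderSets : Set (Set (PathSpace k N A)) :=
  { S | ∃ (ℓ : ℕ) (lam : FinPath k N A ℓ), S = Cyl lam }

/-- The cylinder-set topology on the infinite path space. -/
instance : TopologicalSpace (PathSpace k N A) :=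
  generateFrom (cylinderSets k N A)

/-- The Borel σ-algebra of the cylinder-set topology. -/
instance : MeasurableSpace (PathSpace k N A) := borel _

instance : BorelSpace (PathSpace k N A) := ⟨rfl⟩

lemma isOpen_cyl {ℓ : ℕ} (lam : FinPath k N A ℓ) : IsOpen (Cyl lam) :=
  isOpen_generateFrom_of_mem ⟨ℓ, lam, rfl⟩

lemma measurableSet_cyl {ℓ : ℕ} (lam : FinPath k N A ℓ) : MeasurableSet (Cyl lam) :=
  (isOpen_cyl lam).measurableSet

/-- Edges form a finite type. -/
def edgeEquiv (n : ℕ) : Edge k N A n ≃ Σ p : Fin N, Σ q : Fin N, Fin (A (n : Fin k) p q) where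
  toFun e := ⟨e.rg, e.src, e.idx⟩
  invFun t := ⟨t.1, t.2.1, t.2.2⟩
  left_inv e := rfl
  right_inv t := rfl

instance (n : ℕ) : Finite (Edge k N A n) := @Finite.of_equiv _ _ (@Finite.instSigma _ _ _ fun _ => Finite.instSigma) (edgeEquiv n).symm

instance (ℓ : ℕ) : Finite (FinPath k N A ℓ) := by
  have hinj : Function.Injective
      (fun lam : FinPath k N A ℓ => (lam.vtx, lam.edge)) := by
    rintro ⟨v, e, h1, h2⟩ ⟨v', e', h1', h2'⟩ h
    simp only [Prod.mk.injEq] at h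
    obtain ⟨hv, he⟩ := h
    subst hv; subst he; rfl
  exact Finite.of_injective _ hinj

instance : Countable (FB k N A) := by infer_instance

/-- The initial segment of length `m` of an infinite path. -/
def prefixPath (x : PathSpace k N A) (m : ℕ) : FinPath k N A m where
  vtx := fun i => (x.1 i).rg
  edge := fun i => x.1 i
  rg_eq := fun _ => rfl
  src_eq := fun i => x.2 i

lemma mem_cyl_prefixPath (x : PathSpace k N A) (m : ℕ) : x ∈ Cyl (prefixPath x m) :=
  ⟨rfl, fun _ => rfl⟩

lemma measurableSet_coord (j : ℕ) (P : Edge k N A j → Prop) :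
    MeasurableSet { x : PathSpace k N A | P (x.1 j) } := by
  have h : { x : PathSpace k N A | P (x.1 j) }
      = ⋃ (lam : FinPath k N A (j + 1)) (_ : P (lam.edge (Fin.last j))), Cyl lam := by
    ext x
    simp only [Set.mem_setOf_eq, Set.mem_iUnion]
    constructor
    · intro hx
      exact ⟨prefixPath x (j + 1), hx, mem_cyl_prefixPath x (j + 1)⟩
    · rintro ⟨lam, hP, -, hedge⟩
      have hx : x.1 j = lam.edge (Fin.last j) := hedge (Fin.last j)
      rw [hx]; exact hP
  rw [h]
  exact MeasurableSet.iUnion fun lam => MeasurableSet.iUnion fun _ => measurableSet_cyl lam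

/-- The first level at which two infinite paths differ. -/
noncomputable def firstDiff (x y : PathSpace k N A) : ℕ := sInf { n | x.1 n ≠ y.1 n }

/-- The function `d_w` associated to a weight-type function `w` on finite paths:
`d_w(x,x) = 0`; `d_w(x,y) = 1` if `x` and `y` have no common initial sub-path (i.e. they
do not even start at the same level-0 vertex); and otherwise `d_w(x,y) = w(x ∧ y)`, the
value of `w` on the longest common initial sub-path of `x` and `y`. -/
noncomputable def distW (w : FB k N A → ℝ) (x y : PathSpace k N A) : ℝ :=
  if x = y then 0
  else if (x.1 0).rg = (y.1 0).rg then w ⟨firstDiff x y, prefixPath x (firstDiff x y)⟩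
  else 1

/-- `η` is an (initial) sub-path of `λ`. -/
def IsSubPath {m ℓ : ℕ} (η : FinPath k N A m) (lam : FinPath k N A ℓ) : Prop :=
  ∃ h : m ≤ ℓ, η.rg = lam.rg ∧ ∀ i : Fin m, η.edge i = lam.edge (Fin.castLE h i)

/-- `lam ∈ F_γ B` : the finite path `lam` extends `γ`. -/
def Extends {m : ℕ} (γ : FinPath k N A m) (lam : FB k N A) : Prop :=
  IsSubPath γ lam.2

/-- The spectral radius of a matrix of nonnegative integers, as a real number. -/
noncomputable def specRad {N : ℕ} (M : Matrix (Fin N) (Fin N) ℕ) : ℝ :=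
  (spectralRadius ℂ (M.map (Nat.cast : ℕ → ℂ))).toReal

/-- The weight `w_δ` on the stationary `k`-Bratteli diagram of `A`, relative to data
`ρ : Fin k → ℝ` (the spectral radii) and `xv : Fin N → ℝ` (the Perron–Frobenius
eigenvector): on a path `η` of length `q·k + t` (`0 ≤ t ≤ k-1`) it is
`(ρ₁^{q+1} ⋯ ρ_t^{q+1} · ρ_{t+1}^q ⋯ ρ_k^q)^{-1/δ} · xv (s η)`. -/
noncomputable def wt (δ : ℝ) (ρ : Fin k → ℝ) (xv : Fin N → ℝ) (lam : FB k N A) : ℝ :=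
  (∏ i : Fin k, ρ i ^ (if (i : ℕ) < lam.1 % k then lam.1 / k + 1 else lam.1 / k))
      ^ (-(1 / δ)) * xv lam.2.src

/-- The value `M([λ]) = (ρ₁⋯ρ_t)^{-(q+1)} (ρ_{t+1}⋯ρ_k)^{-q} · x_{s(λ)}` of the
measure `M` on the cylinder set of a path of length `q·k + t`. -/
noncomputable def Mval (ρ : Fin k → ℝ) (xv : Fin N → ℝ) (lam : FB k N A) : ℝ :=
  (∏ i : Fin k, ρ i ^ (if (i : ℕ) < lam.1 % k then lam.1 / k + 1 else lam.1 / k))⁻¹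
    * xv lam.2.src

/-- A family of matrices is irreducible if for every pair of indices some finite product
of matrices from the family has positive corresponding entry. -/
def IrreducibleFamily {k N : ℕ} (A : Fin k → Matrix (Fin N) (Fin N) ℕ) : Prop :=
  ∀ a b : Fin N, ∃ l : List (Fin k), 0 < (l.map A).prod a b

/-- A single square matrix with nonnegative integer entries is irreducible if for every
pair of indices some positive power has positive corresponding entry. -/
def MatIrreducible {N : ℕ} (B : Matrix (Fin N) (Fin N) ℕ) : Prop :=
  ∀ a b : Fin N, ∃ m : ℕ, 0 < m ∧ 0 < (B ^ m) a b

/-- The diameter (in `ℝ≥0∞`) of a set of infinite paths relative to `d_w`. -/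
noncomputable def diamW (w : FB k N A → ℝ) (U : Set (PathSpace k N A)) : ℝ≥0∞ :=
  ⨆ (x) (_ : x ∈ U) (y) (_ : y ∈ U), ENNReal.ofReal (distW w x y)

/-- The `t`-dimensional Hausdorff (outer) measure of a set `Z` relative to the metric
`d_w`: `H^t(Z) = lim_{ε → 0} inf { Σᵢ (diam Uᵢ)^t : Z ⊆ ⋃ᵢ Uᵢ, diam Uᵢ < ε }`. -/
noncomputable def hausW (w : FB k N A → ℝ) (t : ℝ) (Z : Set (PathSpace k N A)) : ℝ≥0∞ :=
  ⨆ (ε : ℝ≥0∞) (_ : 0 < ε),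
    ⨅ (U : ℕ → Set (PathSpace k N A)) (_ : Z ⊆ ⋃ n, U n)
      (_ : ∀ n, diamW w (U n) < ε), ∑' n, diamW w (U n) ^ t

lemma natCast_mul_add (n i : ℕ) : ((n * k + i : ℕ) : Fin k) = (i : Fin k) := by
  push_cast
  simp [Fin.natCast_self]

/-- Transport of edges between levels governed by the same matrix (the diagram is
stationary with period `k`). -/
def Edge.cast {i j : ℕ} (h : (i : Fin k) = (j : Fin k)) (e : Edge k N A i) :
    Edge k N A j where
  rg := e.rg
  src := e.src
  idx := Fin.cast (by rw [h]) e.idx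

/-- The cylinder set `[γ e]` of a finite path `γ` (of length `m`) extended by one
further edge `e` at level `m`. -/
def cylExt {m : ℕ} (γ : FinPath k N A m) (e : Edge k N A m) : Set (PathSpace k N A) :=
  Cyl γ ∩ { x | x.1 m = e }

lemma measurableSet_cylExt {m : ℕ} (γ : FinPath k N A m) (e : Edge k N A m) :
    MeasurableSet (cylExt γ e) :=
  (measurableSet_cyl γ).inter (measurableSet_coord m fun f => f = e)

/-- The cylinder set `[λ μ]` of the concatenation of `λ ∈ F^{nk}B` with `μ ∈ F^{k}B`
(the diagram being stationary of period `k`, `μ` concatenates onto `λ`). -/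
def cylCat {n : ℕ} (lam : FinPath k N A (n * k)) (η : FinPath k N A k) :
    Set (PathSpace k N A) :=
  Cyl lam ∩ { x | (x.1 (n * k)).rg = η.rg } ∩
    ⋂ i : Fin k,
      { x | x.1 (n * k + (i : ℕ)) = Edge.cast (natCast_mul_add n (i : ℕ)).symm (η.edge i) }

lemma measurableSet_cylCat {n : ℕ} (lam : FinPath k N A (n * k)) (η : FinPath k N A k) :
    MeasurableSet (cylCat lam η) :=
  ((measurableSet_cyl lam).inter
      (measurableSet_coord (n * k) (fun e => e.rg = η.rg))).inter
    (MeasurableSet.iInter fun i => measurableSet_coord (n * k + (i : ℕ))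
      (fun e => e = Edge.cast (natCast_mul_add n (i : ℕ)).symm (η.edge i)))


end KBratteli

namespace KBratteli

variable {k N : ℕ} [NeZero k] {A : Fin k → Matrix (Fin N) (Fin N) ℕ}

section L2

variable (M : MeasureTheory.Measure (PathSpace k N A)) [MeasureTheory.IsFiniteMeasure M]

/-- The indicator function `χ_{[λ]}` of a cylinder set, as an element of `L²(X_B, M)`. -/
noncomputable def chi {ℓ : ℕ} (lam : FinPath k N A ℓ) : Lp ℂ 2 M :=
  indicatorConstLp 2 (measurableSet_cyl lam) (measure_ne_top M _) (1 : ℂ)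

/-- The indicator function `χ_{[γ e]}` of the cylinder of a path `γ` extended by one
further edge `e`, as an element of `L²(X_B, M)`. -/
noncomputable def chiE {m : ℕ} (γ : FinPath k N A m) (e : Edge k N A m) : Lp ℂ 2 M :=
  indicatorConstLp 2 (measurableSet_cylExt γ e) (measure_ne_top M _) (1 : ℂ)

/-- The indicator function `χ_{[λ μ]}` of the cylinder of the concatenation of
`λ ∈ F^{nk}B` and `μ ∈ F^{k}B`, as an element of `L²(X_B, M)`. -/
noncomputable def chiC {n : ℕ} (lam : FinPath k N A (n * k)) (η : FinPath k N A k) :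
    Lp ℂ 2 M :=
  indicatorConstLp 2 (measurableSet_cylCat lam η) (measure_ne_top M _) (1 : ℂ)

/-- The constant function `1` in `L²(X_B, M)`. -/
noncomputable def oneL2 : Lp ℂ 2 M :=
  indicatorConstLp 2 MeasurableSet.univ (measure_ne_top M _) (1 : ℂ)

/-- `Ṽ_m`, the linear span in `L²(X_B, M)` of the indicators of cylinders of paths of
length `m`. -/
noncomputable def Vt (m : ℕ) : Submodule ℂ (Lp ℂ 2 M) :=
  Submodule.span ℂ (Set.range fun lam : FinPath k N A m => chi M lam)

/-- `𝒲_n = 𝒱_{n+1} ⊓ 𝒱_n^⊥` where `𝒱_n = Ṽ_{nk}`. -/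
noncomputable def Wn (n : ℕ) : Submodule ℂ (Lp ℂ 2 M) :=
  Vt M ((n + 1) * k) ⊓ (Vt M (n * k))ᗮ

/-- `E_{-1}`: the subspace of constant functions. -/
noncomputable def Eneg : Submodule ℂ (Lp ℂ 2 M) :=
  Submodule.span ℂ {oneL2 M}

/-- `E_0 = span{ M([v])⁻¹ χ_{[v]} − M([v'])⁻¹ χ_{[v']} : v ≠ v' ∈ V₀ }`. -/
noncomputable def Ezero : Submodule ℂ (Lp ℂ 2 M) :=
  Submodule.span ℂ
    { f | ∃ v v' : Fin N, v ≠ v' ∧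
        f = (((M (Cyl (vertexPath v))).toReal : ℂ))⁻¹ • chi M (vertexPath v)
            - (((M (Cyl (vertexPath v'))).toReal : ℂ))⁻¹ • chi M (vertexPath v') }

/-- `E_γ = span{ M([γe])⁻¹ χ_{[γe]} − M([γe'])⁻¹ χ_{[γe']} }` over distinct edges
`e ≠ e'` with range `s(γ)`. -/
noncomputable def Esub {m : ℕ} (γ : FinPath k N A m) : Submodule ℂ (Lp ℂ 2 M) :=
  Submodule.span ℂ
    { f | ∃ e e' : Edge k N A m, e ≠ e' ∧ e.rg = γ.src ∧ e'.rg = γ.src ∧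
        f = (((M (cylExt γ e)).toReal : ℂ))⁻¹ • chiE M γ e
            - (((M (cylExt γ e')).toReal : ℂ))⁻¹ • chiE M γ e' }

noncomputable instance (m : ℕ) : FiniteDimensional ℂ (Vt M m) :=
  FiniteDimensional.span_of_finite ℂ (Set.finite_range _)

noncomputable instance : FiniteDimensional ℂ (Eneg M) :=
  FiniteDimensional.span_of_finite ℂ (Set.finite_singleton _)

/-- `Ξ_q`: the orthogonal projection of `L²(X_B, M)` onto `R_q = Ṽ_{qk}`. -/
noncomputable def Xi (q : ℕ) : Lp ℂ 2 M →L[ℂ] Lp ℂ 2 M :=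
  (Vt M (q * k)).subtypeL.comp (Vt M (q * k)).orthogonalProjectionOnto

/-- `Ξ_{-1}`: the orthogonal projection onto the constants `R_{-1}`. -/
noncomputable def XiNeg : Lp ℂ 2 M →L[ℂ] Lp ℂ 2 M :=
  (Eneg M).subtypeL.comp (Eneg M).orthogonalProjectionOnto

/-- `P_q = Ξ_q − Ξ_{q-1}` (with `Ξ_{-1}` the projection onto the constants). -/
noncomputable def Pq : ℕ → (Lp ℂ 2 M →L[ℂ] Lp ℂ 2 M)
  | 0 => Xi M 0 - XiNeg M
  | (q + 1) => Xi M (q + 1) - Xi M q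

/-- `R_{q-1}` for `q ∈ ℕ`, with the convention `R_{-1} = ` constants. -/
noncomputable def Rprev : ℕ → Submodule ℂ (Lp ℂ 2 M)
  | 0 => Eneg M
  | (q + 1) => Vt M (q * k)

/-- The domain of the Dirac operator `D`. -/
noncomputable def domD (α : ℕ → ℝ) : Set (Lp ℂ 2 M) :=
  { f | Summable fun q : ℕ => α q ^ 2 * ‖Pq M q f‖ ^ 2 }

/-- The Dirac operator `D f = Σ_q α_q P_q f`. -/
noncomputable def opD (α : ℕ → ℝ) (f : Lp ℂ 2 M) : Lp ℂ 2 M :=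
  ∑' q : ℕ, ((α q : ℂ)) • Pq M q f

end L2

end KBratteli

/-!
For every `m`, `Ṽ_{m+1} = Ṽ_m ⊕ ⨆_{|γ| = m} E_γ` orthogonally. Split `χ_[γ] = Σ_e χ_[γe]` and
normalise `u_e = M([γe])⁻¹ χ_[γe]`. Then
`M([γ]) u_e - χ_[γ] = Σ_{e'} M([γe']) (u_e - u_{e'}) ∈ E_γ`, so each `χ_[γe]` lies in
`Ṽ_m + E_γ`; conversely `⟪χ_[λ], u_e⟫ = δ_{λγ}`, so `E_γ ⟂ Ṽ_m`. Both steps need every cylinder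
to have positive measure, which the cylinder formula gives once the eigenvalues `ρ_i` are
positive. The decomposition of `𝒲_n` is then the telescoping of the increasing chain
`Ṽ_{nk} ≤ Ṽ_{nk+1} ≤ ⋯ ≤ Ṽ_{(n+1)k}` into successive orthogonal differences.
-/

theorem Submodule.sum_smul_sub_sum_smul_mem {R M ι : Type*} [Ring R] [AddCommGroup M]
    [Module R M] [Fintype ι] (S : Submodule R M) (c : ι → R) (u : ι → M) (i : ι)
    (h : ∀ j, c j ≠ 0 → u i - u j ∈ S) : (∑ j, c j) • u i - ∑ j, c j • u j ∈ S := by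
  rw [Finset.sum_smul, ← Finset.sum_sub_distrib]
  refine S.sum_mem fun j _ => ?_
  rw [← smul_sub]
  by_cases hj : c j = 0
  · simp [hj]
  · exact S.smul_mem _ (h j hj)

theorem ofReal_measureReal_ne_zero {α : Type*} [MeasurableSpace α] {μ : Measure α}
    [IsFiniteMeasure μ] {s : Set α} (h : μ s ≠ 0) : (μ.real s : ℂ) ≠ 0 :=
  Complex.ofReal_ne_zero.2 ((measureReal_ne_zero_iff (measure_ne_top μ s)).2 h)

section IndicatorConstLp

open Function

variable {α E : Type*} [MeasurableSpace α] {μ : Measure α} [NormedAddCommGroup E] {p : ℝ≥0∞}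

theorem indicatorConstLp_of_measure_eq_zero {s : Set α} (hs : MeasurableSet s) (hμs : μ s ≠ ∞)
    (c : E) (h : μ s = 0) : indicatorConstLp p hs hμs c = 0 := by
  ext1
  filter_upwards [indicatorConstLp_coeFn (p := p) (hs := hs) (hμs := hμs) (c := c),
    Lp.coeFn_zero E p μ, measure_eq_zero_iff_ae_notMem.1 h] with x hx hx0 hxs
  rw [hx, hx0, Set.indicator_of_notMem hxs]
  rfl

theorem indicatorConstLp_eq_sum_of_biUnion_eq {ι : Type*} (t : Finset ι) {s : ι → Set α}
    {u : Set α} (hs : ∀ i, MeasurableSet (s i)) (hμs : ∀ i, μ (s i) ≠ ∞)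
    (hd : Pairwise (Disjoint on s)) (hu : MeasurableSet u) (hμu : μ u ≠ ∞)
    (hsu : ⋃ i ∈ t, s i = u) (c : E) :
    indicatorConstLp p hu hμu c = ∑ i ∈ t, indicatorConstLp p (hs i) (hμs i) c := by
  classical
  subst hsu
  induction t using Finset.induction_on with
  | empty => simp
  | insert a t ha ih =>
    have hμt : μ (⋃ i ∈ t, s i) ≠ ∞ :=
      ne_top_of_le_ne_top hμu (measure_mono (Set.biUnion_subset_biUnion_left (by simp)))
    have hdt : Disjoint (s a) (⋃ i ∈ t, s i) :=
      Set.disjoint_iUnion₂_right.2 fun i hi => hd (ne_of_mem_of_not_mem hi ha).symm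
    simp only [Finset.set_biUnion_insert, Finset.sum_insert ha]
    rw [indicatorConstLp_disjoint_union (hs a) (t.measurableSet_biUnion fun i _ => hs i) (hμs a)
      hμt hdt, ih]

end IndicatorConstLp

section OrthogonalChain

variable {𝕜 E : Type*} [RCLike 𝕜] [NormedAddCommGroup E] [InnerProductSpace 𝕜 E]

theorem Submodule.sup_inf_orthogonal_of_le {K S : Submodule 𝕜 E} (h : S ≤ Kᗮ) :
    (K ⊔ S) ⊓ Kᗮ = S := by
  rw [sup_comm, sup_inf_assoc_of_le K h, K.inf_orthogonal_eq_bot, sup_bot_eq]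

variable {V : ℕ → Submodule 𝕜 E}

theorem Monotone.inner_eq_zero_of_mem_inf_orthogonal (hV : Monotone V) {a b : ℕ} (hab : a ≠ b)
    {f g : E} (hf : f ∈ V a ⊓ (V (a - 1))ᗮ) (hg : g ∈ V b ⊓ (V (b - 1))ᗮ) : inner 𝕜 f g = 0 := by
  rcases hab.lt_or_gt with h | h
  · exact Submodule.inner_right_of_mem_orthogonal (hV (by omega) hf.1) hg.2
  · exact Submodule.inner_left_of_mem_orthogonal (hV (by omega) hg.1) hf.2

theorem Monotone.sup_iSup_inf_orthogonal (hV : Monotone V)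
    [∀ n, (V n).HasOrthogonalProjection] (n j : ℕ) :
    V n ⊔ ⨆ i ∈ Finset.Icc 1 j, V (n + i) ⊓ (V (n + i - 1))ᗮ = V (n + j) := by
  induction j with
  | zero => simp
  | succ j ih =>
    rw [← Finset.insert_Icc_right_eq_Icc_add_one (by omega), Finset.iSup_insert, sup_left_comm,
      ih, show n + (j + 1) - 1 = n + j by omega, inf_comm, sup_comm]
    exact Submodule.sup_orthogonal_inf_of_hasOrthogonalProjection (hV (Nat.le_succ (n + j)))

theorem Monotone.inf_orthogonal_eq_iSup (hV : Monotone V)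
    [∀ n, (V n).HasOrthogonalProjection] (n j : ℕ) :
    V (n + j) ⊓ (V n)ᗮ = ⨆ i ∈ Finset.Icc 1 j, V (n + i) ⊓ (V (n + i - 1))ᗮ := by
  rw [← hV.sup_iSup_inf_orthogonal n j]
  refine Submodule.sup_inf_orthogonal_of_le (iSup₂_le fun i hi => ?_)
  rw [Finset.mem_Icc] at hi
  exact inf_le_right.trans (Submodule.orthogonal_le (hV (by omega)))

end OrthogonalChain

theorem Matrix.pos_of_mulVec_eq_smul {n : Type*} [Fintype n] {B : Matrix n n ℕ} {x : n → ℝ}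
    {r : ℝ} (hx : ∀ v, 0 < x v) (h : (B.map (Nat.cast : ℕ → ℝ)).mulVec x = r • x) (a : n)
    (ha : ∑ b, B a b ≠ 0) : 0 < r := by
  obtain ⟨b, -, hb⟩ := Finset.exists_ne_zero_of_sum_ne_zero ha
  have hrow : r * x a = ∑ c, (B a c : ℝ) * x c := by
    simpa [Matrix.mulVec, dotProduct] using (congrFun h a).symm
  have hsum : 0 < ∑ c, (B a c : ℝ) * x c :=
    Finset.sum_pos' (fun c _ => mul_nonneg (Nat.cast_nonneg _) (hx c).le)
      ⟨b, Finset.mem_univ b, mul_pos (Nat.cast_pos.2 (Nat.pos_of_ne_zero hb)) (hx b)⟩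
  exact pos_of_mul_pos_left (hrow ▸ hsum) (hx a).le

namespace KBratteli

variable {k N : ℕ} [NeZero k] {A : Fin k → Matrix (Fin N) (Fin N) ℕ}

section Paths

open Function

noncomputable instance (n : ℕ) : Fintype (Edge k N A n) := Fintype.ofFinite _

noncomputable instance (ℓ : ℕ) : Fintype (FinPath k N A ℓ) := Fintype.ofFinite _

theorem FinPath.ext_of_rg_of_edge {m : ℕ} {γ γ' : FinPath k N A m} (h0 : γ.rg = γ'.rg)
    (he : ∀ i, γ.edge i = γ'.edge i) : γ = γ' := by
  obtain ⟨v, e, _, hs⟩ := γ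
  obtain ⟨v', e', _, hs'⟩ := γ'
  obtain rfl : e = e' := funext he
  obtain rfl : v = v' := funext fun i => by
    induction i using Fin.cases with
    | zero => exact h0
    | succ j => rw [← hs j, ← hs' j]
  rfl

theorem disjoint_cyl {m : ℕ} {γ γ' : FinPath k N A m} (h : γ ≠ γ') :
    Disjoint (Cyl γ) (Cyl γ') :=
  Set.disjoint_left.2 fun _ ⟨h0, he⟩ ⟨h0', he'⟩ =>
    h (FinPath.ext_of_rg_of_edge (h0.symm.trans h0') fun i => (he i).symm.trans (he' i))

theorem rg_apply_of_mem_cyl {m : ℕ} {γ : FinPath k N A m} {x : PathSpace k N A}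
    (hx : x ∈ Cyl γ) : (x.1 m).rg = γ.src := by
  cases m with
  | zero => exact hx.1
  | succ j =>
    rw [← x.2 j, show x.1 j = γ.edge (Fin.last j) from hx.2 (Fin.last j), γ.src_eq, Fin.succ_last]
    rfl

theorem cylExt_subset_cyl {m : ℕ} (γ : FinPath k N A m) (e : Edge k N A m) :
    cylExt γ e ⊆ Cyl γ :=
  Set.inter_subset_left

theorem cylExt_eq_empty {m : ℕ} {γ : FinPath k N A m} {e : Edge k N A m}
    (h : e.rg ≠ γ.src) : cylExt γ e = ∅ :=
  Set.eq_empty_of_forall_notMem fun _ ⟨hx, hxe⟩ => h (hxe ▸ rg_apply_of_mem_cyl hx)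

theorem pairwise_disjoint_cylExt {m : ℕ} (γ : FinPath k N A m) :
    Pairwise (Disjoint on cylExt γ) :=
  fun _ _ h => Set.disjoint_left.2 fun _ ⟨_, hx⟩ ⟨_, hx'⟩ => h (hx.symm.trans hx')

theorem iUnion_cylExt {m : ℕ} (γ : FinPath k N A m) : ⋃ e, cylExt γ e = Cyl γ :=
  Set.Subset.antisymm (Set.iUnion_subset (cylExt_subset_cyl γ))
    fun x hx => Set.mem_iUnion.2 ⟨x.1 m, hx, rfl⟩

def FinPath.trunc {m : ℕ} (lam : FinPath k N A (m + 1)) : FinPath k N A m where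
  vtx i := lam.vtx i.castSucc
  edge i := lam.edge i.castSucc
  rg_eq i := lam.rg_eq i.castSucc
  src_eq i := lam.src_eq i.castSucc

def FinPath.snoc {m : ℕ} (γ : FinPath k N A m) (e : Edge k N A m) (h : e.rg = γ.src) :
    FinPath k N A (m + 1) where
  vtx := Fin.snoc γ.vtx e.src
  edge := Fin.snoc (α := fun i => Edge k N A i) γ.edge e
  rg_eq i := by
    induction i using Fin.lastCases with
    | last => simp only [Fin.snoc_last, Fin.snoc_castSucc]; exact h
    | cast j => simpa using γ.rg_eq j
  src_eq i := by
    induction i using Fin.lastCases with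
    | last => simp only [Fin.succ_last, Fin.snoc_last]
    | cast j =>
      simp only [Fin.succ_castSucc, Fin.snoc_castSucc]
      exact γ.src_eq j

theorem cyl_eq_cylExt_trunc {m : ℕ} (lam : FinPath k N A (m + 1)) :
    Cyl lam = cylExt lam.trunc (lam.edge (Fin.last m)) := by
  ext x
  refine ⟨fun ⟨h0, he⟩ => ⟨⟨h0, fun i => he i.castSucc⟩, he (Fin.last m)⟩,
    fun ⟨⟨h0, he⟩, hm⟩ => ⟨h0, fun i => ?_⟩⟩
  induction i using Fin.lastCases with
  | last => exact hm
  | cast j => exact he j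

theorem FinPath.trunc_snoc {m : ℕ} (γ : FinPath k N A m) (e : Edge k N A m)
    (h : e.rg = γ.src) : (γ.snoc e h).trunc = γ :=
  FinPath.ext_of_rg_of_edge (by simp [FinPath.rg, FinPath.trunc, FinPath.snoc])
    fun i => by simp [FinPath.trunc, FinPath.snoc]

theorem cylExt_eq_cyl_snoc {m : ℕ} (γ : FinPath k N A m) (e : Edge k N A m)
    (h : e.rg = γ.src) : cylExt γ e = Cyl (γ.snoc e h) := by
  rw [cyl_eq_cylExt_trunc, FinPath.trunc_snoc]
  simp [FinPath.snoc]

end Paths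

theorem Mval_pos {ρ : Fin k → ℝ} {x : Fin N → ℝ} (hρ : ∀ i, 0 < ρ i) (hx : ∀ v, 0 < x v)
    (lam : FB k N A) : 0 < Mval ρ x lam :=
  mul_pos (inv_pos.2 (Finset.prod_pos fun i _ => pow_pos (hρ i) _)) (hx _)

section L2

variable (M : Measure (PathSpace k N A)) [IsFiniteMeasure M]

theorem chi_eq_sum_chiE {m : ℕ} (γ : FinPath k N A m) : chi M γ = ∑ e, chiE M γ e :=
  indicatorConstLp_eq_sum_of_biUnion_eq _ _ _ (pairwise_disjoint_cylExt γ) _ _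
    (by simpa using iUnion_cylExt γ) 1

theorem chi_eq_chiE_trunc {m : ℕ} (lam : FinPath k N A (m + 1)) :
    chi M lam = chiE M lam.trunc (lam.edge (Fin.last m)) := by
  simp only [chi, chiE, cyl_eq_cylExt_trunc]

theorem chiE_eq_chi_snoc {m : ℕ} (γ : FinPath k N A m) (e : Edge k N A m) (h : e.rg = γ.src) :
    chiE M γ e = chi M (γ.snoc e h) := by
  simp only [chi, chiE, cylExt_eq_cyl_snoc γ e h]

theorem chiE_eq_zero {m : ℕ} {γ : FinPath k N A m} {e : Edge k N A m} (h : e.rg ≠ γ.src) :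
    chiE M γ e = 0 :=
  indicatorConstLp_of_measure_eq_zero _ _ _ (by rw [cylExt_eq_empty h, measure_empty])

theorem measureReal_cyl_eq_sum {m : ℕ} (γ : FinPath k N A m) :
    M.real (Cyl γ) = ∑ e, M.real (cylExt γ e) := by
  rw [← iUnion_cylExt γ, measureReal_iUnion_fintype (pairwise_disjoint_cylExt γ)
    (measurableSet_cylExt γ)]

theorem chi_mem_Vt {m : ℕ} (lam : FinPath k N A m) : chi M lam ∈ Vt M m :=
  Submodule.subset_span ⟨lam, rfl⟩

theorem chiE_mem_Vt_succ {m : ℕ} (γ : FinPath k N A m) (e : Edge k N A m) :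
    chiE M γ e ∈ Vt M (m + 1) := by
  by_cases h : e.rg = γ.src
  · rw [chiE_eq_chi_snoc M γ e h]
    exact chi_mem_Vt M _
  · rw [chiE_eq_zero M h]
    exact zero_mem _

theorem monotone_Vt : Monotone (Vt M) :=
  monotone_nat_of_le_succ fun m => Submodule.span_le.2 <| Set.range_subset_iff.2 fun γ => by
    rw [SetLike.mem_coe, chi_eq_sum_chiE]
    exact Submodule.sum_mem _ fun e _ => chiE_mem_Vt_succ M γ e

noncomputable def normalizedChiE {m : ℕ} (γ : FinPath k N A m) (e : Edge k N A m) : Lp ℂ 2 M :=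
  (((M (cylExt γ e)).toReal : ℂ))⁻¹ • chiE M γ e

theorem smul_normalizedChiE {m : ℕ} (γ : FinPath k N A m) (e : Edge k N A m) :
    (M.real (cylExt γ e) : ℂ) • normalizedChiE M γ e = chiE M γ e := by
  by_cases h : M (cylExt γ e) = 0
  · rw [chiE, indicatorConstLp_of_measure_eq_zero _ _ _ h, normalizedChiE, chiE,
      indicatorConstLp_of_measure_eq_zero _ _ _ h, smul_zero, smul_zero]
  · rw [normalizedChiE, smul_smul, ← measureReal_def,
      mul_inv_cancel₀ (ofReal_measureReal_ne_zero h), one_smul]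

theorem normalizedChiE_sub_mem_Esub {m : ℕ} {γ : FinPath k N A m} {e e' : Edge k N A m}
    (he : e.rg = γ.src) (he' : e'.rg = γ.src) :
    normalizedChiE M γ e - normalizedChiE M γ e' ∈ Esub M γ := by
  obtain rfl | hne := eq_or_ne e e'
  · rw [sub_self]
    exact zero_mem _
  · exact Submodule.subset_span ⟨e, e', hne, he, he', rfl⟩

theorem smul_normalizedChiE_sub_chi_mem_Esub {m : ℕ} {γ : FinPath k N A m} {e : Edge k N A m}
    (he : e.rg = γ.src) :
    (M.real (Cyl γ) : ℂ) • normalizedChiE M γ e - chi M γ ∈ Esub M γ := by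
  rw [measureReal_cyl_eq_sum, chi_eq_sum_chiE, Complex.ofReal_sum]
  simp_rw [← smul_normalizedChiE M γ]
  refine Submodule.sum_smul_sub_sum_smul_mem _ _ _ e fun e' he' => ?_
  refine normalizedChiE_sub_mem_Esub M he (not_not.1 fun h => he' ?_)
  rw [cylExt_eq_empty h, measureReal_empty, Complex.ofReal_zero]

theorem chiE_mem_Vt_sup_Esub {m : ℕ} {γ : FinPath k N A m} (hγ : M (Cyl γ) ≠ 0)
    (e : Edge k N A m) : chiE M γ e ∈ Vt M m ⊔ Esub M γ := by
  by_cases he : e.rg = γ.src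
  · rw [← smul_normalizedChiE]
    refine Submodule.smul_mem _ _
      ((Submodule.smul_mem_iff _ (ofReal_measureReal_ne_zero hγ)).1 ?_)
    rw [← add_sub_cancel (chi M γ) ((M.real (Cyl γ) : ℂ) • normalizedChiE M γ e)]
    exact Submodule.add_mem_sup (chi_mem_Vt M γ) (smul_normalizedChiE_sub_chi_mem_Esub M he)
  · rw [chiE_eq_zero M he]
    exact zero_mem _

theorem Vt_succ_eq {m : ℕ} (hpos : ∀ lam : FinPath k N A m, M (Cyl lam) ≠ 0) :
    Vt M (m + 1) = Vt M m ⊔ ⨆ γ : FinPath k N A m, Esub M γ := by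
  refine le_antisymm (Submodule.span_le.2 <| Set.range_subset_iff.2 fun lam => ?_)
    (sup_le (monotone_Vt M m.le_succ) (iSup_le fun γ => Submodule.span_le.2 ?_))
  · rw [SetLike.mem_coe, chi_eq_chiE_trunc]
    exact sup_le_sup_left (le_iSup (Esub M) lam.trunc) _ (chiE_mem_Vt_sup_Esub M (hpos _) _)
  · rintro _ ⟨e, e', -, -, -, rfl⟩
    exact sub_mem (Submodule.smul_mem _ _ (chiE_mem_Vt_succ M γ e))
      (Submodule.smul_mem _ _ (chiE_mem_Vt_succ M γ e'))

theorem inner_chi_normalizedChiE {m : ℕ} {γ : FinPath k N A m} {e : Edge k N A m}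
    (he : M (cylExt γ e) ≠ 0) (lam : FinPath k N A m) :
    inner ℂ (chi M lam) (normalizedChiE M γ e) = if lam = γ then 1 else 0 := by
  rw [normalizedChiE, inner_smul_right, chi, chiE,
    L2.inner_indicatorConstLp_one_indicatorConstLp_one]
  split_ifs with h
  · subst h
    rw [Set.inter_eq_right.2 (cylExt_subset_cyl lam e)]
    exact inv_mul_cancel₀ (ofReal_measureReal_ne_zero he)
  · simp [Set.disjoint_iff_inter_eq_empty.1 ((disjoint_cyl h).mono_right (cylExt_subset_cyl γ e))]

theorem Esub_le_orthogonal_Vt {m : ℕ} (hpos : ∀ lam : FinPath k N A (m + 1), M (Cyl lam) ≠ 0) :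
    ⨆ γ : FinPath k N A m, Esub M γ ≤ (Vt M m)ᗮ := by
  refine iSup_le fun γ => (Submodule.isOrtho_span.2 ?_).symm
  rintro _ ⟨lam, rfl⟩ _ ⟨e, e', -, he, he', rfl⟩
  change inner ℂ (chi M lam) (normalizedChiE M γ e - normalizedChiE M γ e') = 0
  rw [inner_sub_right, inner_chi_normalizedChiE M (cylExt_eq_cyl_snoc γ e he ▸ hpos _),
    inner_chi_normalizedChiE M (cylExt_eq_cyl_snoc γ e' he' ▸ hpos _), sub_self]

theorem Vt_succ_inf_orthogonal (hpos : ∀ ℓ (lam : FinPath k N A ℓ), M (Cyl lam) ≠ 0) (m : ℕ) :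
    Vt M (m + 1) ⊓ (Vt M m)ᗮ = ⨆ γ : FinPath k N A m, Esub M γ := by
  rw [Vt_succ_eq M (hpos m)]
  exact Submodule.sup_inf_orthogonal_of_le (Esub_le_orthogonal_Vt M (hpos (m + 1)))

end L2

theorem statement15_general (k N : ℕ) [NeZero k]
    (A : Fin k → Matrix (Fin N) (Fin N) ℕ)
    (hrow : ∀ (i : Fin k) (a : Fin N), 2 ≤ ∑ b, A i a b)
    (ρ : Fin k → ℝ)
    (x : Fin N → ℝ) (hxpos : ∀ v, 0 < x v)
    (hxeig : ∀ i, ((A i).map (Nat.cast : ℕ → ℝ)).mulVec x = ρ i • x)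
    (M : MeasureTheory.Measure (PathSpace k N A)) [MeasureTheory.IsProbabilityMeasure M]
    (hM : ∀ lam : FB k N A, M (Cyl lam.2) = ENNReal.ofReal (Mval ρ x lam)) :
    (∀ m : ℕ, 1 ≤ m →
        Vt M m ⊓ (Vt M (m - 1))ᗮ = ⨆ γ : FinPath k N A (m - 1), Esub M γ) ∧
    (∀ n : ℕ,
        (∀ j ∈ Finset.Icc 1 k, ∀ j' ∈ Finset.Icc 1 k, j ≠ j' →
          ∀ f ∈ Vt M (n * k + j) ⊓ (Vt M (n * k + j - 1))ᗮ,
          ∀ g ∈ Vt M (n * k + j') ⊓ (Vt M (n * k + j' - 1))ᗮ,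
            (inner ℂ f g : ℂ) = 0) ∧
        Wn M n = ⨆ j ∈ Finset.Icc 1 k, Vt M (n * k + j) ⊓ (Vt M (n * k + j - 1))ᗮ) := by
  have hpos : ∀ ℓ (lam : FinPath k N A ℓ), M (Cyl lam) ≠ 0 := fun ℓ lam => by
    have hρ : ∀ i, 0 < ρ i := fun i =>
      Matrix.pos_of_mulVec_eq_smul hxpos (hxeig i) lam.src
        (two_pos.trans_le (hrow i lam.src)).ne'
    rw [hM ⟨ℓ, lam⟩]
    exact (ENNReal.ofReal_pos.2 (Mval_pos hρ hxpos _)).ne'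
  refine ⟨fun m hm => ?_, fun n => ⟨fun j _ j' _ hjj' f hf g hg => ?_, ?_⟩⟩
  · obtain ⟨m, rfl⟩ := Nat.exists_eq_add_of_le' hm
    exact Vt_succ_inf_orthogonal M hpos m
  · exact (monotone_Vt M).inner_eq_zero_of_mem_inf_orthogonal (by omega) hf hg
  · rw [Wn, add_one_mul, (monotone_Vt M).inf_orthogonal_eq_iSup]

/-- For every `m ≥ 1`, `Ṽ_m ∩ Ṽ_{m−1}^⊥` equals the span of the
union of the `E_γ` over `|γ| = m − 1`; consequently
`𝒲_n = ⊕_{j=1}^k (Ṽ_{nk+j} ∩ Ṽ_{nk+j−1}^⊥)`, an orthogonal direct sum. -/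
theorem statement15 (k N : ℕ) [NeZero k] [NeZero N]
    (A : Fin k → Matrix (Fin N) (Fin N) ℕ)
    (hcomm : ∀ i j, A i * A j = A j * A i)
    (hirr : IrreducibleFamily A)
    (hrow : ∀ (i : Fin k) (a : Fin N), 2 ≤ ∑ b, A i a b)
    (hAirr : MatIrreducible ((List.ofFn A).prod))
    (ρ : Fin k → ℝ) (hρ : ∀ i, ρ i = specRad (A i))
    (x : Fin N → ℝ) (hxpos : ∀ v, 0 < x v) (hxsum : ∑ v, x v = 1)
    (hxeig : ∀ i, ((A i).map (Nat.cast : ℕ → ℝ)).mulVec x = ρ i • x)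
    (M : MeasureTheory.Measure (PathSpace k N A)) [MeasureTheory.IsProbabilityMeasure M]
    (hM : ∀ lam : FB k N A, M (Cyl lam.2) = ENNReal.ofReal (Mval ρ x lam)) :
    (∀ m : ℕ, 1 ≤ m →
        Vt M m ⊓ (Vt M (m - 1))ᗮ = ⨆ γ : FinPath k N A (m - 1), Esub M γ) ∧
    (∀ n : ℕ,
        (∀ j ∈ Finset.Icc 1 k, ∀ j' ∈ Finset.Icc 1 k, j ≠ j' →
          ∀ f ∈ Vt M (n * k + j) ⊓ (Vt M (n * k + j - 1))ᗮ,
          ∀ g ∈ Vt M (n * k + j') ⊓ (Vt M (n * k + j' - 1))ᗮ,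
            (inner ℂ f g : ℂ) = 0) ∧
        Wn M n = ⨆ j ∈ Finset.Icc 1 k, Vt M (n * k + j) ⊓ (Vt M (n * k + j - 1))ᗮ) :=
  statement15_general k N A hrow ρ x hxpos hxeig M hM

end KBratteli
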